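/- Let R be a domain. Then R has the finite t-basic ideal property if and only if for every nonzero finitely generated ideal I of R, I_t equals the set Î := {x ∈ R : I is a t-reduction of (I, x)}. -/

import Mathlib

open scoped nonZeroDivisors

/-- The `v`-operation (divisorial closure) on `R`-submodules of the fraction field `K`:
`I_v = (I⁻¹)⁻¹` where `I⁻¹ = (R : I) = 1 / I`. -/
noncomputable def vS (R K : Type*) [CommRing R] [Field K] [Algebra R K]
    (I : Submodule R K) : Submodule R K := 1 / (1 / I)

/-- The `t`-operation: `I_t = ⋃ J_v` where `J` ranges over nonzero finitely generated
sub-ideals of `I`. -/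
noncomputable def tS (R K : Type*) [CommRing R] [Field K] [Algebra R K]
    (I : Submodule R K) : Submodule R K :=
  ⨆ J ∈ {J : Submodule R K | J ≠ ⊥ ∧ J.FG ∧ J ≤ I}, vS R K J

/-- The image of an ideal of `R` in the fraction field `K`, as an `R`-submodule. -/
noncomputable def idealToSub (R K : Type*) [CommRing R] [Field K] [Algebra R K]
    (I : Ideal R) : Submodule R K := Submodule.map (Algebra.linearMap R K) I

/-- The `t`-closure of an ideal of `R`, computed in the fraction field `K`. -/
noncomputable def tI (R K : Type*) [CommRing R] [Field K] [Algebra R K]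
    (I : Ideal R) : Submodule R K := tS R K (idealToSub R K I)

/-- The `v`-closure of an ideal of `R`, computed in the fraction field `K`. -/
noncomputable def vI (R K : Type*) [CommRing R] [Field K] [Algebra R K]
    (I : Ideal R) : Submodule R K := vS R K (idealToSub R K I)


/-!
The `t`-operation is a closure operation of finite type satisfying `(A * B)_t = (A * B_t)_t`,
so `t`-closures of products and powers only depend on the `t`-closures of the factors.

If `R` has the finite `t`-basic ideal property and `I` is a `t`-reduction of `(I, x)`, then
`I_t = (I, x)_t ∋ x`; conversely `x ∈ I_t` gives `(I, x)_t = I_t`, making `I` a `t`-reduction of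
`(I, x)` with exponent `0`.

For the other direction let `J ⊆ I` be a `t`-reduction with exponent `n`. Since `I^(n+1)` is
finitely generated, it already lies in the `v`-closure of a finitely generated part of `J * I^n`,
so some finitely generated `J₁ ⊆ J` is still a `t`-reduction of `I`. Adjoin the generators
`a₁, …, aₖ` of `I` to `J₁` one at a time: each `B = J₁ + (a₁, …, aᵢ)` is a `t`-reduction of `I`,
and by induction `(B, aᵢ₊₁)_t = I_t`, so `B` is a `t`-reduction of `(B, aᵢ₊₁)`. The hypothesis
then puts `aᵢ₊₁` in `B_t`, whence `B_t = (B, aᵢ₊₁)_t = I_t`; for `B = J₁` this gives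
`I_t = (J₁)_t ⊆ J_t`.
-/

theorem Submodule.one_div_le_one_div_of_le {R A : Type*} [CommSemiring R] [CommSemiring A]
    [Algebra R A] {I J : Submodule R A} (h : I ≤ J) : 1 / J ≤ 1 / I :=
  Submodule.le_div_iff.mpr fun _x hx _z hz => Submodule.mem_div_iff_forall_mul_mem.mp hx _ (h hz)

section Closure

variable {R K : Type*} [CommRing R] [Field K] [Algebra R K]

theorem le_vS (A : Submodule R K) : A ≤ vS R K A :=
  Submodule.le_div_iff_mul_le.mpr Submodule.mul_one_div_le_one

theorem vS_mono {A B : Submodule R K} (h : A ≤ B) : vS R K A ≤ vS R K B :=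
  Submodule.one_div_le_one_div_of_le (Submodule.one_div_le_one_div_of_le h)

theorem vS_vS (A : Submodule R K) : vS R K (vS R K A) = vS R K A :=
  le_antisymm (Submodule.one_div_le_one_div_of_le (le_vS (1 / A))) (le_vS _)

theorem mul_vS_le (A D : Submodule R K) : A * vS R K D ≤ vS R K (A * D) := by
  refine Submodule.mul_le.mpr fun a ha y hy =>
    Submodule.mem_div_iff_forall_mul_mem.mpr fun z hz => ?_
  have hza : z * a ∈ 1 / D := Submodule.mem_div_iff_forall_mul_mem.mpr fun d hd => by
    simpa only [mul_assoc] using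
      Submodule.mem_div_iff_forall_mul_mem.mp hz _ (Submodule.mul_mem_mul ha hd)
  rw [show a * y * z = y * (z * a) by ring]
  exact Submodule.mem_div_iff_forall_mul_mem.mp hy _ hza

theorem vS_le_tS {A C : Submodule R K} (hC0 : C ≠ ⊥) (hC : C.FG) (hCA : C ≤ A) :
    vS R K C ≤ tS R K A :=
  le_iSup₂_of_le C ⟨hC0, hC, hCA⟩ le_rfl

theorem le_tS (A : Submodule R K) : A ≤ tS R K A := by
  intro x hx
  rcases eq_or_ne x 0 with rfl | hx0
  · exact zero_mem _
  · exact vS_le_tS (by simpa using hx0) (Submodule.fg_span_singleton x)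
      ((Submodule.span_singleton_le_iff_mem x A).mpr hx)
      (le_vS _ (Submodule.mem_span_singleton_self x))

theorem tS_mono {A B : Submodule R K} (h : A ≤ B) : tS R K A ≤ tS R K B :=
  iSup₂_le fun _C hC => vS_le_tS hC.1 hC.2.1 (hC.2.2.trans h)

theorem exists_le_vS_of_fg_le_tS {A B : Submodule R K} (hB : B.FG) (hB0 : B ≠ ⊥)
    (h : B ≤ tS R K A) : ∃ C, C ≠ ⊥ ∧ C.FG ∧ C ≤ A ∧ B ≤ vS R K C := by
  set S := vS R K '' {C : Submodule R K | C ≠ ⊥ ∧ C.FG ∧ C ≤ A}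
  have hBS : B ≤ sSup S := by rwa [sSup_image]
  have hne : S.Nonempty := by
    refine S.eq_empty_or_nonempty.resolve_left fun hS => hB0 ?_
    rwa [hS, sSup_empty, le_bot_iff] at hBS
  have hdir : DirectedOn (· ≤ ·) S := by
    rintro - ⟨C, hC, rfl⟩ - ⟨D, hD, rfl⟩
    exact ⟨_, ⟨C ⊔ D, ⟨fun h => hC.1 (sup_eq_bot_iff.mp h).1, hC.2.1.sup hD.2.1,
      sup_le hC.2.2 hD.2.2⟩, rfl⟩, vS_mono le_sup_left, vS_mono le_sup_right⟩
  obtain ⟨-, ⟨C, hC, rfl⟩, hBC⟩ :=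
    (CompleteLattice.isCompactElement_iff_le_of_directed_sSup_le _ B).mp
      ((Submodule.fg_iff_compact B).mp hB) S hne hdir hBS
  exact ⟨C, hC.1, hC.2.1, hC.2.2, hBC⟩

theorem tS_tS (A : Submodule R K) : tS R K (tS R K A) = tS R K A := by
  refine le_antisymm (iSup₂_le fun C hC => ?_) (tS_mono (le_tS A))
  obtain ⟨D, hD0, hDfg, hDA, hCD⟩ := exists_le_vS_of_fg_le_tS hC.2.1 hC.1 hC.2.2
  calc vS R K C ≤ vS R K (vS R K D) := vS_mono hCD
    _ = vS R K D := vS_vS D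
    _ ≤ tS R K A := vS_le_tS hD0 hDfg hDA

theorem tS_eq_tS_of_le_of_le_tS {A B : Submodule R K} (hAB : A ≤ B) (hBA : B ≤ tS R K A) :
    tS R K A = tS R K B :=
  le_antisymm (tS_mono hAB) ((tS_mono hBA).trans (tS_tS A).le)

theorem mul_tS_le (A B : Submodule R K) : A * tS R K B ≤ tS R K (A * B) := by
  refine Submodule.mul_le.mpr fun a ha y hy => ?_
  rcases eq_or_ne a 0 with rfl | ha0
  · simp
  rcases eq_or_ne y 0 with rfl | hy0
  · simp
  obtain ⟨C, hC0, hCfg, hCB, hyC⟩ := exists_le_vS_of_fg_le_tS (Submodule.fg_span_singleton y)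
    (by simpa using hy0) ((Submodule.span_singleton_le_iff_mem y _).mpr hy)
  refine vS_le_tS (by simp [ha0, hC0]) ((Submodule.fg_span_singleton a).mul hCfg)
    (mul_le_mul' ((Submodule.span_singleton_le_iff_mem a A).mpr ha) hCB)
    (mul_vS_le _ C (Submodule.mul_mem_mul (Submodule.mem_span_singleton_self a)
      (hyC (Submodule.mem_span_singleton_self y))))

theorem tS_mul_tS (A B : Submodule R K) : tS R K (A * tS R K B) = tS R K (A * B) :=
  (tS_eq_tS_of_le_of_le_tS (mul_le_mul_right (le_tS B) A) (mul_tS_le A B)).symm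

theorem tS_mul_congr {A A' B B' : Submodule R K} (hA : tS R K A = tS R K A')
    (hB : tS R K B = tS R K B') : tS R K (A * B) = tS R K (A' * B') := by
  rw [← tS_mul_tS A B, hB, tS_mul_tS, mul_comm A B', ← tS_mul_tS B' A, hA, tS_mul_tS,
    mul_comm B' A']

end Closure

section Ideal

variable {R K : Type*} [CommRing R] [Field K] [Algebra R K]

theorem idealToSub_mono {I J : Ideal R} (h : I ≤ J) : idealToSub R K I ≤ idealToSub R K J :=
  Submodule.map_mono h

theorem idealToSub_fg {I : Ideal R} (h : I.FG) : (idealToSub R K I).FG :=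
  Submodule.FG.map _ h

theorem idealToSub_mul (I J : Ideal R) :
    idealToSub R K (I * J) = idealToSub R K I * idealToSub R K J :=
  Submodule.map_mul I J (Algebra.ofId R K)

theorem idealToSub_pow (I : Ideal R) (k : ℕ) :
    idealToSub R K (I ^ k) = idealToSub R K I ^ k :=
  Submodule.map_pow I (Algebra.ofId R K) k

theorem idealToSub_ne_bot [IsFractionRing R K] {I : Ideal R} (hI : I ≠ ⊥) :
    idealToSub R K I ≠ ⊥ := by
  obtain ⟨a, haI, ha0⟩ := Submodule.exists_mem_ne_zero_of_ne_bot hI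
  exact Submodule.ne_bot_iff _ |>.mpr ⟨_, Submodule.mem_map_of_mem haI,
    (IsFractionRing.to_map_eq_zero_iff (R := R) (K := K)).not.mpr ha0⟩

theorem tI_mono {I J : Ideal R} (h : I ≤ J) : tI R K I ≤ tI R K J :=
  tS_mono (idealToSub_mono h)

theorem tI_mul_congr {I I' J J' : Ideal R} (hI : tI R K I = tI R K I')
    (hJ : tI R K J = tI R K J') : tI R K (I * J) = tI R K (I' * J') := by
  simpa only [tI, idealToSub_mul] using tS_mul_congr hI hJ

theorem tI_pow_congr {I I' : Ideal R} (h : tI R K I = tI R K I') (k : ℕ) :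
    tI R K (I ^ k) = tI R K (I' ^ k) := by
  induction k with
  | zero => rw [pow_zero, pow_zero]
  | succ k ih => rw [pow_succ, pow_succ]; exact tI_mul_congr ih h

theorem tI_add_span_singleton_eq {I : Ideal R} {x : R} (h : algebraMap R K x ∈ tI R K I) :
    tI R K (I + Ideal.span {x}) = tI R K I := by
  refine (tS_eq_tS_of_le_of_le_tS (idealToSub_mono le_sup_left) ?_).symm
  rw [Submodule.add_eq_sup, idealToSub, Submodule.map_sup, Submodule.map_span,
    Set.image_singleton]
  exact sup_le (le_tS _) ((Submodule.span_singleton_le_iff_mem _ _).mpr h)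

theorem tI_mul_pow_eq_of_le {J J' I : Ideal R} {n : ℕ} (hJJ' : J ≤ J') (hJ'I : J' ≤ I)
    (h : tI R K (J * I ^ n) = tI R K (I ^ (n + 1))) :
    tI R K (J' * I ^ n) = tI R K (I ^ (n + 1)) := by
  refine le_antisymm (tI_mono ?_) (h ▸ tI_mono (mul_le_mul_left hJJ' _))
  rw [pow_succ']
  exact mul_le_mul_left hJ'I _

theorem exists_fg_le_of_fg_le_idealToSub_mul {J : Ideal R} {M D : Submodule R K} (hD : D.FG)
    (h : D ≤ idealToSub R K J * M) :
    ∃ J₁ : Ideal R, J₁.FG ∧ J₁ ≤ J ∧ D ≤ idealToSub R K J₁ * M := by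
  set S := (fun J₁ => idealToSub R K J₁ * M) '' {J₁ : Ideal R | J₁.FG ∧ J₁ ≤ J}
  have hne : S.Nonempty := ⟨_, ⊥, ⟨Submodule.fg_bot, bot_le⟩, rfl⟩
  have hdir : DirectedOn (· ≤ ·) S := by
    rintro - ⟨J₁, h₁, rfl⟩ - ⟨J₂, h₂, rfl⟩
    exact ⟨_, ⟨J₁ ⊔ J₂, ⟨Submodule.FG.sup h₁.1 h₂.1, sup_le h₁.2 h₂.2⟩, rfl⟩,
      mul_le_mul_left (idealToSub_mono le_sup_left) M,
      mul_le_mul_left (idealToSub_mono le_sup_right) M⟩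
  have hJS : idealToSub R K J * M ≤ sSup S := by
    refine Submodule.mul_le.mpr fun a ha m hm => ?_
    obtain ⟨j, hj, rfl⟩ := Submodule.mem_map.mp ha
    have hjS : idealToSub R K (Ideal.span {j}) * M ∈ S :=
      ⟨Ideal.span {j}, ⟨Submodule.fg_span_singleton j, (Ideal.span_singleton_le_iff_mem J).mpr hj⟩,
        rfl⟩
    exact le_sSup hjS
      (Submodule.mul_mem_mul (Submodule.mem_map_of_mem (Ideal.mem_span_singleton_self j)) hm)
  obtain ⟨-, ⟨J₁, hJ₁, rfl⟩, hDJ₁⟩ :=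
    (CompleteLattice.isCompactElement_iff_le_of_directed_sSup_le _ D).mp
      ((Submodule.fg_iff_compact D).mp hD) S hne hdir (h.trans hJS)
  exact ⟨J₁, hJ₁.1, hJ₁.2, hDJ₁⟩

theorem exists_fg_le_tI_mul_pow_eq [IsFractionRing R K] {I J : Ideal R} (hI : I.FG)
    (hI0 : I ≠ ⊥) (hJI : J ≤ I) {n : ℕ} (h : tI R K (J * I ^ n) = tI R K (I ^ (n + 1))) :
    ∃ J₁ ≤ J, J₁ ≠ ⊥ ∧ J₁.FG ∧ tI R K (J₁ * I ^ n) = tI R K (I ^ (n + 1)) := by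
  simp only [tI, idealToSub_mul, idealToSub_pow] at h ⊢
  have hIn : (idealToSub R K I ^ (n + 1)).FG := (idealToSub_fg hI).pow _
  have hIn0 : idealToSub R K I ^ (n + 1) ≠ ⊥ := pow_ne_zero _ (idealToSub_ne_bot hI0)
  obtain ⟨D, hD0, hDfg, hDJ, hID⟩ :=
    exists_le_vS_of_fg_le_tS hIn hIn0 (h ▸ le_tS (idealToSub R K I ^ (n + 1)))
  obtain ⟨J₁, hJ₁fg, hJ₁J, hDJ₁⟩ := exists_fg_le_of_fg_le_idealToSub_mul hDfg hDJ
  have hJ₁In0 : idealToSub R K J₁ * idealToSub R K I ^ n ≠ ⊥ := ne_bot_of_le_ne_bot hD0 hDJ₁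
  refine ⟨J₁, hJ₁J, fun hJ₁ => hJ₁In0 (by simp [hJ₁, idealToSub]), hJ₁fg,
    tS_eq_tS_of_le_of_le_tS ?_ ?_⟩
  · rw [pow_succ']
    exact mul_le_mul_left (idealToSub_mono (hJ₁J.trans hJI)) _
  · exact hID.trans <| (vS_mono hDJ₁).trans <|
      vS_le_tS hJ₁In0 ((idealToSub_fg hJ₁fg).mul ((idealToSub_fg hI).pow n)) le_rfl

theorem tI_eq_of_tI_mul_pow_eq
    (H : ∀ B : Ideal R, B ≠ ⊥ → B.FG → ∀ x : R,
      (∃ n : ℕ, tI R K (B * (B + Ideal.span {x}) ^ n) = tI R K ((B + Ideal.span {x}) ^ (n + 1)))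
        → algebraMap R K x ∈ tI R K B)
    {I : Ideal R} {n : ℕ} (s : Finset R) :
    ∀ B : Ideal R, B ≠ ⊥ → B.FG → B ≤ I → tI R K (B * I ^ n) = tI R K (I ^ (n + 1)) →
      B ⊔ Ideal.span s = I → tI R K B = tI R K I := by
  classical
  induction s using Finset.induction_on with
  | empty =>
    intro B _ _ _ _ hBI
    rw [← hBI, Finset.coe_empty, Ideal.span_empty, sup_bot_eq]
  | insert a s _ ih =>
    intro B hB0 hBfg hBI hred hspan
    set B₂ := B + Ideal.span {a}
    have hBB₂ : B ≤ B₂ := le_sup_left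
    have hB₂I : B₂ ≤ I := sup_le hBI <| (Ideal.span_singleton_le_iff_mem I).mpr <|
      hspan ▸ Submodule.mem_sup_right (Ideal.subset_span (Finset.mem_insert_self a s))
    have hB₂ : tI R K B₂ = tI R K I :=
      ih B₂ (ne_bot_of_le_ne_bot hB0 hBB₂) (Submodule.FG.sup hBfg (Submodule.fg_span_singleton a))
        hB₂I (tI_mul_pow_eq_of_le hBB₂ hB₂I hred)
        (by rw [← hspan, Finset.coe_insert, Ideal.span_insert, ← sup_assoc]; rfl)
    have hBred : tI R K (B * B₂ ^ n) = tI R K (B₂ ^ (n + 1)) :=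
      calc tI R K (B * B₂ ^ n) = tI R K (B * I ^ n) := tI_mul_congr rfl (tI_pow_congr hB₂ n)
        _ = tI R K (I ^ (n + 1)) := hred
        _ = tI R K (B₂ ^ (n + 1)) := (tI_pow_congr hB₂ _).symm
    rw [← hB₂, tI_add_span_singleton_eq (H B hB0 hBfg a ⟨n, hBred⟩)]

end Ideal

theorem finite_t_basic_iff_t_closure_eq_hat_general (R K : Type*) [CommRing R]
    [Field K] [Algebra R K] [IsFractionRing R K] :
    (∀ I : Ideal R, I ≠ 0 → I.FG → ∀ J : Ideal R, J ≠ 0 → J ≤ I →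
      (∃ n : ℕ, tI R K (J * I ^ n) = tI R K (I ^ (n + 1))) → tI R K J = tI R K I)
    ↔ (∀ I : Ideal R, I ≠ 0 → I.FG → ∀ x : R,
        (algebraMap R K x ∈ tI R K I ↔
          ∃ n : ℕ, tI R K (I * (I + Ideal.span {x}) ^ n)
            = tI R K ((I + Ideal.span {x}) ^ (n + 1)))) := by
  constructor
  · intro hbasic I hI0 hIfg x
    refine ⟨fun hx => ⟨0, by simpa using (tI_add_span_singleton_eq hx).symm⟩, fun hred => ?_⟩
    have hII' : I ≤ I + Ideal.span {x} := le_sup_left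
    have hI'fg : (I + Ideal.span {x}).FG := Submodule.FG.sup hIfg (Submodule.fg_span_singleton x)
    rw [hbasic _ (ne_bot_of_le_ne_bot hI0 hII') hI'fg I hI0 hII' hred]
    exact le_tS _ (Submodule.mem_map_of_mem
      (Submodule.mem_sup_right (Ideal.mem_span_singleton_self x)))
  · rintro H I hI0 hIfg J - hJI ⟨n, hn⟩
    obtain ⟨J₁, hJ₁J, hJ₁0, hJ₁fg, hJ₁⟩ := exists_fg_le_tI_mul_pow_eq hIfg hI0 hJI hn
    obtain ⟨s, hs⟩ := hIfg
    have hJ₁I : tI R K J₁ = tI R K I :=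
      tI_eq_of_tI_mul_pow_eq (fun B hB0 hBfg x => (H B hB0 hBfg x).mpr) s J₁ hJ₁0 hJ₁fg
        (hJ₁J.trans hJI) hJ₁ (by rw [hs]; exact sup_eq_right.mpr (hJ₁J.trans hJI))
    exact le_antisymm (tI_mono hJI) (hJ₁I ▸ tI_mono hJ₁J)

/-- A domain `R` has the finite `t`-basic ideal property iff for every nonzero finitely
generated ideal `I`, `I_t` equals `Î = {x ∈ R : I is a t-reduction of (I, x)}`. -/
theorem finite_t_basic_iff_t_closure_eq_hat (R K : Type*) [CommRing R] [IsDomain R]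
    [Field K] [Algebra R K] [IsFractionRing R K] :
    (∀ I : Ideal R, I ≠ 0 → I.FG → ∀ J : Ideal R, J ≠ 0 → J ≤ I →
      (∃ n : ℕ, tI R K (J * I ^ n) = tI R K (I ^ (n + 1))) → tI R K J = tI R K I)
    ↔ (∀ I : Ideal R, I ≠ 0 → I.FG → ∀ x : R,
        (algebraMap R K x ∈ tI R K I ↔
          ∃ n : ℕ, tI R K (I * (I + Ideal.span {x}) ^ n)
            = tI R K ((I + Ideal.span {x}) ^ (n + 1)))) :=
  finite_t_basic_iff_t_closure_eq_hat_general R K
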